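/- Let W be a Weyl group with simple roots Π. Let x, u ∈ W with u⁻¹ ≤_R x in the weak right order and let J ⊆ Π ∩ xΠ. Then ℓ(u w_J) = ℓ(u) + ℓ(w_J) and ℓ(u w_J x) = ℓ(x) + ℓ(w_J) − ℓ(u), where w_J is the longest element of the parabolic subgroup W_J. -/

import Mathlib

/-!
Since no `s_α` with `α ∈ J` is a left descent of `x`, the element `x` is minimal in its coset
`W_J x`, so lengths add: `ℓ(w x) = ℓ(w) + ℓ(x)` for every `w ∈ W_J`. This is proved by induction
on `ℓ(x)` from the exchange condition, which comes from Tits' parity cocycle on `W × ℤ/2`.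
Moreover `x⁻¹ W_J x` is generated by the simple reflections `x⁻¹ s_α x`, so conjugation by `x`
does not increase lengths in `W_J`. Writing `x = u⁻¹ v` with `ℓ(x) = ℓ(u) + ℓ(v)`, both identities
follow by squeezing between triangle inequalities, using `u w x = v (x⁻¹ w x)` for the second.
-/

open scoped Classical

section
variable {B W : Type*} [Group W] [Finite W] {M : CoxeterMatrix B}

/-- The parabolic subgroup `W_J` generated by the simple reflections `s_α`, `α ∈ J`. -/
def parabolic (cs : CoxeterSystem M W) (J : Set B) : Subgroup W :=
  Subgroup.closure (cs.simple '' J)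

/-- `w` is the longest element of the parabolic subgroup `W_J`. -/
def IsLongestIn (cs : CoxeterSystem M W) (J : Set B) (w : W) : Prop :=
  w ∈ parabolic cs J ∧ ∀ v ∈ parabolic cs J, cs.length v ≤ cs.length w

/-- The set `Π ∩ xΠ` of simple roots mapped to simple roots by `x`, described
combinatorially: `Π ∩ xΠ = {β ∈ Π | ∃ α ∈ Π, s_β = x s_α x⁻¹ and ℓ(x s_α) = ℓ(x) + 1}`. -/
def simpleCap (cs : CoxeterSystem M W) (x : W) : Set B :=
  {i | ∃ j, cs.simple i * x = x * cs.simple j ∧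
    cs.length (x * cs.simple j) = cs.length x + 1}

/-- The weak right order on `W`: `v ≤_R w` iff `w = v u` with `ℓ(w) = ℓ(v) + ℓ(u)`. -/
def leR (cs : CoxeterSystem M W) (v w : W) : Prop :=
  ∃ u : W, w = v * u ∧ cs.length w = cs.length v + cs.length u

end

theorem Function.End.mul_apply {α : Type*} (f g : Function.End α) (a : α) :
    (f * g) a = f (g a) :=
  rfl

namespace CoxeterSystem

open List

variable {B W : Type*} [Group W] {M : CoxeterMatrix B} (cs : CoxeterSystem M W)

local prefix:100 "s " => cs.simple
local prefix:100 "π " => cs.wordProd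
local prefix:100 "ℓ " => cs.length
local prefix:100 "ris " => cs.rightInvSeq

/- Tits' cocycle: along a word `ω`, the second coordinate of `(t, ε)` changes by the number of
occurrences of `t` in the right inversion sequence of `ω`, see `reflCocycleHom_wordProd_apply`. -/
noncomputable def reflCocycleAction (i : B) : Function.End (W × ZMod 2) :=
  fun p => (s i * p.1 * s i, p.2 + if p.1 = s i then 1 else 0)

local notation "η" => cs.reflCocycleAction

theorem reflCocycleAction_mul_apply (i i' : B) (t : W) (ε : ZMod 2) :
    (η i * η i') (t, ε) = (s i * s i' * t * (s i * s i')⁻¹,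
      ε + ((if t = s i' then 1 else 0) + if s i * s i' * t = s i' then 1 else 0)) := by
  have hcond : s i' * (t * s i') = s i ↔ s i * (s i' * t) = s i' := by
    rw [← mul_right_inj (s i), ← mul_left_inj (s i')]
    simp only [mul_assoc, simple_mul_simple_self, mul_one, one_mul]
  simp only [reflCocycleAction, Function.End.mul_apply, mul_inv_rev, inv_simple, mul_assoc,
    add_assoc, hcond]

theorem pow_reflCocycleAction_mul_apply (i i' : B) (k : ℕ) (t : W) (ε : ZMod 2) :
    ((η i * η i') ^ k) (t, ε) = ((s i * s i') ^ k * t * ((s i * s i') ^ k)⁻¹,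
      ε + ∑ e ∈ Finset.range (2 * k), if (s i * s i') ^ e * t = s i' then 1 else 0) := by
  set p := s i * s i' with hp
  have hpsp : p * s i' * p = s i' := by
    simp only [p, mul_assoc, simple_mul_simple_cancel_left]
  have hshift (t : W) (e : ℕ) : p ^ e * (p * t * p⁻¹) = s i' ↔ p ^ (e + 1 + 1) * t = s i' := by
    rw [show p ^ (e + 1 + 1) * t = p * (p ^ e * (p * t * p⁻¹)) * p by group]
    conv_rhs => rw [← hpsp, mul_left_inj, mul_right_inj]
  induction k generalizing t ε with
  | zero => simp [Function.End.one_def]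
  | succ k ih =>
    rw [pow_succ, Function.End.mul_apply, reflCocycleAction_mul_apply, ← hp, ih]
    refine Prod.ext (by group) ?_
    simp only [hshift, Nat.mul_succ, Finset.sum_range_succ', pow_zero, one_mul, zero_add,
      pow_one]
    ring

theorem isLiftable_reflCocycleAction : M.IsLiftable cs.reflCocycleAction := by
  intro i i'
  funext ⟨t, ε⟩
  rw [pow_reflCocycleAction_mul_apply, two_mul, Finset.sum_range_add]
  simp only [pow_add, simple_mul_simple_pow, one_mul, inv_one, mul_one, CharTwo.add_self_eq_zero,
    add_zero]
  rfl

noncomputable def reflCocycleHom : W →* Function.End (W × ZMod 2) :=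
  cs.lift ⟨_, cs.isLiftable_reflCocycleAction⟩

theorem reflCocycleHom_wordProd_apply (ω : List B) (t : W) (ε : ZMod 2) :
    cs.reflCocycleHom (π ω) (t, ε) = (π ω * t * (π ω)⁻¹, ε + (ris ω).count t) := by
  induction ω generalizing ε with
  | nil => simp [Function.End.one_def]
  | cons i ω ih =>
    have hcond : π ω * t * (π ω)⁻¹ = s i ↔ (π ω)⁻¹ * s i * π ω = t := by
      constructor <;> intro h <;> rw [← h] <;> group
    rw [wordProd_cons, map_mul, Function.End.mul_apply, ih, reflCocycleHom,
      lift_apply_simple, reflCocycleAction]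
    refine Prod.ext (by simp only [mul_inv_rev, inv_simple]; group) ?_
    simp only [rightInvSeq, count_cons, beq_iff_eq, if_congr hcond rfl rfl]
    split_ifs <;> push_cast <;> ring

theorem count_rightInvSeq_eq_of_wordProd_eq {ω ω' : List B} (h : π ω = π ω') (t : W) :
    ((ris ω).count t : ZMod 2) = (ris ω').count t := by
  have := congrArg (fun g ↦ (cs.reflCocycleHom g (t, 0)).2) h
  simpa only [reflCocycleHom_wordProd_apply, zero_add] using this

theorem wordProd_mem_parabolic {J : Set B} {ω : List B} (hω : ∀ b ∈ ω, b ∈ J) :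
    π ω ∈ parabolic cs J :=
  Subgroup.list_prod_mem _ fun _ hw ↦ by
    obtain ⟨b, hb, rfl⟩ := mem_map.mp hw
    exact Subgroup.subset_closure ⟨b, hω b hb, rfl⟩

theorem mem_parabolic_of_mem_rightInvSeq {J : Set B} {ω : List B} (hω : ∀ b ∈ ω, b ∈ J) {t : W}
    (ht : t ∈ ris ω) : t ∈ parabolic cs J := by
  induction ω with
  | nil => simp at ht
  | cons i ω ih =>
    have hωJ : ∀ b ∈ ω, b ∈ J := fun b hb ↦ hω b (mem_cons_of_mem i hb)
    rcases mem_cons.mp ht with rfl | ht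
    · exact mul_mem (mul_mem (inv_mem (cs.wordProd_mem_parabolic hωJ))
        (Subgroup.subset_closure ⟨i, hω i mem_cons_self, rfl⟩)) (cs.wordProd_mem_parabolic hωJ)
    · exact ih hωJ ht

theorem rightInvSeq_append (ω ω' : List B) :
    ris (ω ++ ω') = (ris ω).map (MulAut.conj (π ω')⁻¹) ++ ris ω' := by
  induction ω with
  | nil => simp
  | cons i ω ih =>
    simp only [cons_append, rightInvSeq, ih, map_cons, wordProd_append, MulAut.conj_apply,
      mul_inv_rev, inv_inv, mul_assoc]

theorem simple_mem_rightInvSeq_of_isRightDescent {ω : List B} {i : B}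
    (h : cs.IsRightDescent (π ω) i) : s i ∈ ris ω := by
  -- `ω'.concat i` is a word for `π ω` whose right inversion sequence contains `s i` exactly once
  obtain ⟨ω', hω', hω'eq⟩ := cs.exists_isReduced (π ω * s i)
  have hnot : s i ∉ ris ω' := fun hmem ↦ by
    have := (cs.isRightInversion_of_mem_rightInvSeq hω' hmem).2
    rw [← hω'eq, simple_mul_simple_cancel_right] at this
    exact lt_asymm h this
  have hnot' : s i ∉ (ris ω').map (MulAut.conj (s i)) := fun hmem ↦ by
    obtain ⟨t, ht, hts⟩ := mem_map.mp hmem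
    rw [MulAut.conj_apply, mul_inv_eq_iff_eq_mul, mul_right_inj] at hts
    exact hnot (hts ▸ ht)
  have hodd := cs.count_rightInvSeq_eq_of_wordProd_eq
    (show π (ω'.concat i) = π ω by rw [wordProd_concat, ← hω'eq, simple_mul_simple_cancel_right])
    (s i)
  rw [rightInvSeq_concat, concat_eq_append, count_append, count_eq_zero.mpr hnot'] at hodd
  refine count_pos_iff.mp (Nat.pos_of_ne_zero fun h0 ↦ ?_)
  simp [h0] at hodd

theorem exists_wordProd_eraseIdx_eq_mul_simple {ω : List B} {i : B}
    (h : cs.IsRightDescent (π ω) i) : ∃ j < ω.length, π (ω.eraseIdx j) = π ω * s i := by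
  obtain ⟨j, hj, hget⟩ := getElem_of_mem (cs.simple_mem_rightInvSeq_of_isRightDescent h)
  rw [length_rightInvSeq] at hj
  refine ⟨j, hj, ?_⟩
  rw [← wordProd_mul_getD_rightInvSeq, getD_eq_getElem _ _ (by simpa using hj), hget]

theorem exists_isReduced_of_mem_parabolic {J : Set B} {w : W} (hw : w ∈ parabolic cs J) :
    ∃ ω, cs.IsReduced ω ∧ (∀ b ∈ ω, b ∈ J) ∧ w = π ω := by
  have step {w : W} {i : B} (hi : i ∈ J) :
      (∃ ω, cs.IsReduced ω ∧ (∀ b ∈ ω, b ∈ J) ∧ w = π ω) →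
      ∃ ω, cs.IsReduced ω ∧ (∀ b ∈ ω, b ∈ J) ∧ w * s i = π ω := by
    rintro ⟨ω, hω, hωJ, rfl⟩
    by_cases h : cs.IsRightDescent (π ω) i
    · obtain ⟨j, hj, heq⟩ := cs.exists_wordProd_eraseIdx_eq_mul_simple h
      refine ⟨ω.eraseIdx j, ?_, fun b hb ↦ hωJ b ((eraseIdx_sublist ω j).mem hb), heq.symm⟩
      have := length_eraseIdx_add_one hj
      rw [isRightDescent_iff, ← heq] at h
      unfold IsReduced at hω ⊢
      omega
    · refine ⟨ω.concat i, ?_, fun b hb ↦ ?_, (wordProd_concat ..).symm⟩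
      · rw [not_isRightDescent_iff] at h
        simp only [IsReduced, wordProd_concat, h, length_concat]
        rw [hω]
      · rcases mem_append.mp (concat_eq_append ▸ hb) with hb | hb
        exacts [hωJ b hb, mem_singleton.mp hb ▸ hi]
  induction hw using Subgroup.closure_induction_right with
  | one => exact ⟨[], by simp [IsReduced], by simp, by simp⟩
  | mul_right _ _ _ hy ih =>
    obtain ⟨i, hi, rfl⟩ := hy
    exact step hi ih
  | mul_inv_cancel _ _ _ hy ih =>
    obtain ⟨i, hi, rfl⟩ := hy
    simpa only [inv_simple] using step hi ih

theorem not_isRightDescent_mul_of_mem_parabolic {J : Set B} {y w : W} {m : B}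
    (hy : ¬ cs.IsRightDescent y m) (hym : ∀ i ∈ J, ¬ cs.IsLeftDescent (y * s m) i)
    (hadd : ∀ r ∈ parabolic cs J, ℓ (r * y) = ℓ r + ℓ y) (hw : w ∈ parabolic cs J) :
    ¬ cs.IsRightDescent (w * y) m := by
  intro hwy
  obtain ⟨ωw, -, hωwJ, rfl⟩ := cs.exists_isReduced_of_mem_parabolic hw
  obtain ⟨ωy, hωy, rfl⟩ := cs.exists_isReduced y
  rw [← wordProd_append] at hwy
  have hmem := cs.simple_mem_rightInvSeq_of_isRightDescent hwy
  rw [rightInvSeq_append, mem_append, mem_map] at hmem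
  rcases hmem with ⟨r, hr, hrm⟩ | hmem
  · -- `y s_m = r y` with `r ∈ W_J`; additivity forces `ℓ r = 1`, so `r = s_k` with `k ∈ J`,
    -- and `s_k` is a left descent of `y s_m`
    have hrJ := cs.mem_parabolic_of_mem_rightInvSeq hωwJ hr
    have hyr : π ωy * s m = r * π ωy := by
      rw [← hrm, MulAut.conj_apply, inv_inv]
      group
    have hlen : ℓ r = 1 := by
      have := hadd r hrJ
      rw [← hyr, (cs.not_isRightDescent_iff).mp hy] at this
      omega
    obtain ⟨ρ, hρ, hρJ, rfl⟩ := cs.exists_isReduced_of_mem_parabolic hrJ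
    obtain ⟨k, rfl⟩ := List.length_eq_one_iff.mp (hρ ▸ hlen)
    apply hym k (hρJ k (mem_singleton_self k))
    rw [IsLeftDescent, hyr, wordProd_singleton, simple_mul_simple_cancel_left, ← wordProd_singleton,
      ← hyr, (cs.not_isRightDescent_iff).mp hy]
    exact Nat.lt_succ_self _
  · exact hy (cs.isRightInversion_of_mem_rightInvSeq hωy hmem).2

theorem length_mul_eq_add_of_mem_parabolic {J : Set B} {x w : W}
    (hx : ∀ i ∈ J, ¬ cs.IsLeftDescent x i) (hw : w ∈ parabolic cs J) :
    ℓ (w * x) = ℓ w + ℓ x := by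
  induction hn : ℓ x generalizing x w with
  | zero => rw [cs.length_eq_zero_iff.mp hn, mul_one, add_zero]
  | succ n ih =>
    obtain ⟨m, hm⟩ := cs.exists_rightDescent_of_ne_one (w := x) fun h ↦ by simp [h] at hn
    obtain ⟨y, rfl⟩ : ∃ y, x = y * s m := ⟨x * s m, (simple_mul_simple_cancel_right cs m).symm⟩
    have hyn : ℓ y = n := by
      have := (cs.isRightDescent_iff).mp hm
      rw [simple_mul_simple_cancel_right] at this
      omega
    have hy : ¬ cs.IsRightDescent y m := by
      rw [not_isRightDescent_iff]
      omega
    have hyJ : ∀ i ∈ J, ¬ cs.IsLeftDescent y i := fun i hi hyi ↦ by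
      have := cs.length_mul_le (s i * y) (s m)
      rw [mul_assoc, (cs.not_isLeftDescent_iff).mp (hx i hi), length_simple] at this
      unfold IsLeftDescent at hyi
      omega
    have hadd : ∀ r ∈ parabolic cs J, ℓ (r * y) = ℓ r + ℓ y := fun r hr ↦ by
      rw [hyn]
      exact ih hyJ hr hyn
    have hwy := cs.not_isRightDescent_mul_of_mem_parabolic hy hx hadd hw
    rw [not_isRightDescent_iff, hadd w hw] at hwy
    rw [← mul_assoc, hwy, hyn]
    rfl

theorem length_inv_mul_mul_le_of_mem_parabolic {J : Set B} {x w : W}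
    (hx : ∀ i ∈ J, ∃ j, s i * x = x * s j) (hw : w ∈ parabolic cs J) :
    ℓ (x⁻¹ * w * x) ≤ ℓ w := by
  have hconj (ω : List B) (hω : ∀ b ∈ ω, b ∈ J) :
      ∃ ω' : List B, ω'.length = ω.length ∧ x⁻¹ * π ω * x = π ω' := by
    induction ω with
    | nil => exact ⟨[], rfl, by simp⟩
    | cons i ω ih =>
      obtain ⟨ω', hlen, heq⟩ := ih fun b hb ↦ hω b (mem_cons_of_mem i hb)
      obtain ⟨j, hj⟩ := hx i (hω i mem_cons_self)
      refine ⟨j :: ω', by simp [hlen], ?_⟩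
      have hj' : s j = x⁻¹ * s i * x := by rw [mul_assoc, hj, ← mul_assoc, inv_mul_cancel, one_mul]
      rw [wordProd_cons, wordProd_cons, ← heq, hj']
      group
  obtain ⟨ω, hω, hωJ, rfl⟩ := cs.exists_isReduced_of_mem_parabolic hw
  obtain ⟨ω', hlen, heq⟩ := hconj ω hωJ
  calc ℓ (x⁻¹ * π ω * x) ≤ ω'.length := heq ▸ cs.length_wordProd_le ω'
    _ = ℓ (π ω) := hlen.trans hω.symm

theorem length_mul_eq_add_of_leR_inv {u x w : W} (hu : leR cs u⁻¹ x)
    (hw : ℓ (w⁻¹ * x) = ℓ w + ℓ x) : ℓ (u * w) = ℓ u + ℓ w := by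
  obtain ⟨v, rfl, hx⟩ := hu
  have h₁ := cs.length_mul_le (w⁻¹ * u⁻¹) v
  have h₂ := cs.length_mul_le u w
  have h₃ : ℓ (w⁻¹ * u⁻¹) = ℓ (u * w) := by rw [← mul_inv_rev, cs.length_inv]
  rw [← mul_assoc] at hw
  rw [cs.length_inv] at hx
  omega

theorem length_mul_mul_add_eq_of_leR_inv {u x w : W} (hu : leR cs u⁻¹ x)
    (hw : ℓ (w * x) = ℓ w + ℓ x) (hconj : ℓ (x⁻¹ * w * x) ≤ ℓ w) :
    ℓ (u * w * x) + ℓ u = ℓ x + ℓ w := by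
  obtain ⟨v, rfl, hx⟩ := hu
  have h₁ := cs.length_mul_le u⁻¹ (u * w * (u⁻¹ * v))
  have h₂ := cs.length_mul_le v ((u⁻¹ * v)⁻¹ * w * (u⁻¹ * v))
  rw [show u⁻¹ * (u * w * (u⁻¹ * v)) = w * (u⁻¹ * v) by group, cs.length_inv] at h₁
  rw [show v * ((u⁻¹ * v)⁻¹ * w * (u⁻¹ * v)) = u * w * (u⁻¹ * v) by group] at h₂
  rw [cs.length_inv] at hx
  omega

end CoxeterSystem

theorem length_u_wJ_and_u_wJ_x_general
    {B W : Type*} [Group W] {M : CoxeterMatrix B}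
    (cs : CoxeterSystem M W) (x u : W) (J : Set B)
    (hu : leR cs u⁻¹ x)
    (hJ : J ⊆ simpleCap cs x)
    (wJ : W) (hwJ : IsLongestIn cs J wJ) :
    cs.length (u * wJ) = cs.length u + cs.length wJ ∧
    cs.length (u * wJ * x) + cs.length u = cs.length x + cs.length wJ := by
  have hdesc : ∀ i ∈ J, ¬ cs.IsLeftDescent x i := fun i hi ↦ by
    obtain ⟨j, hij, hlen⟩ := hJ hi
    rw [cs.not_isLeftDescent_iff, hij, hlen]
  have hconj : ∀ i ∈ J, ∃ j, cs.simple i * x = x * cs.simple j :=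
    fun i hi ↦ (hJ hi).imp fun _ ↦ And.left
  have hwJ_mem : wJ ∈ parabolic cs J := hwJ.1
  refine ⟨cs.length_mul_eq_add_of_leR_inv hu ?_, cs.length_mul_mul_add_eq_of_leR_inv hu
    (cs.length_mul_eq_add_of_mem_parabolic hdesc hwJ_mem)
    (cs.length_inv_mul_mul_le_of_mem_parabolic hconj hwJ_mem)⟩
  rw [cs.length_mul_eq_add_of_mem_parabolic hdesc (inv_mem hwJ_mem), cs.length_inv]

theorem length_u_wJ_and_u_wJ_x
    {B W : Type*} [Group W] [Finite W] {M : CoxeterMatrix B}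
    (cs : CoxeterSystem M W) (x u : W) (J : Set B)
    (hu : leR cs u⁻¹ x)
    (hJ : J ⊆ simpleCap cs x)
    (wJ : W) (hwJ : IsLongestIn cs J wJ) :
    cs.length (u * wJ) = cs.length u + cs.length wJ ∧
    cs.length (u * wJ * x) + cs.length u = cs.length x + cs.length wJ :=
  length_u_wJ_and_u_wJ_x_general cs x u J hu hJ wJ hwJ
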